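/- arXiv:1703.01801 — 2 statements merged into one kernel-verified Lean document; each statement's English description precedes it below -/
import Mathlib

section
/- The graded algebra B = ⊕_n B_n is approximable: for every real ε > 0 there exists p₀ such that for all p ≥ p₀ and all n ≥ 1, the dimension of the ℂ-linear span in ℂ(x) of all n-fold products of elements of B_p is at least (1 − ε) times the dimension of B_{n·p}. -/
open Polynomial

/-- `J n = ∑_{i=0}^∞ ⌊n/2^i⌋`, which equals the finite sum over `i = 0, …, n`
since `⌊n/2^i⌋ = 0` whenever `2^i > n`. -/
def J (n : ℕ) : ℕ := ∑ i ∈ Finset.range (n + 1), n / 2 ^ i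

/-- `P z n = ∏_{i=0}^∞ (x − z_i)^{⌊n/2^i⌋}` in `ℂ[x]`, which equals the finite
product over `i = 0, …, n` since the exponent vanishes whenever `2^i > n`. -/
noncomputable def P (z : ℕ → ℂ) (n : ℕ) : Polynomial ℂ :=
  ∏ i ∈ Finset.range (n + 1), (X - C (z i)) ^ (n / 2 ^ i)

/-- `B_n = { Q(x)/P_n(x) : Q ∈ ℂ[x], deg Q ≤ J(n) }`, as a subset of the field
of rational functions `ℂ(x)`. -/
noncomputable def B (z : ℕ → ℂ) (n : ℕ) : Set (RatFunc ℂ) :=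
  {f | ∃ Q : Polynomial ℂ, Q.natDegree ≤ J n ∧
    f = algebraMap (Polynomial ℂ) (RatFunc ℂ) Q /
        algebraMap (Polynomial ℂ) (RatFunc ℂ) (P z n)}

/-- The set of `n`-fold products `f₁ ⋯ f_n` with each `f_k ∈ B_p`; its
`ℂ`-linear span is the image of `Sym^n(B_p) → B_{np}`. -/
noncomputable def prodSet (z : ℕ → ℂ) (p n : ℕ) : Set (RatFunc ℂ) :=
  {f | ∃ g : Fin n → RatFunc ℂ, (∀ k, g k ∈ B z p) ∧ f = ∏ k, g k}

/-! ### Auxiliary arithmetic lemmas about `J` -/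

lemma sum_div_pow_le (m : ℕ) : ∀ k, (∑ i ∈ Finset.range k, m / 2 ^ i) + 2 * (m / 2 ^ k) ≤ 2 * m
  | 0 => by simp
  | k + 1 => by
    have h1 := sum_div_pow_le m k
    have h2 : m / 2 ^ (k + 1) = m / 2 ^ k / 2 := by
      rw [pow_succ, Nat.div_div_eq_div_mul]
    rw [Finset.sum_range_succ, h2]
    omega

lemma le_sum_div_pow (m : ℕ) : ∀ k, 2 * m ≤ (∑ i ∈ Finset.range k, m / 2 ^ i) + 2 * (m / 2 ^ k) + k
  | 0 => by simp
  | k + 1 => by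
    have h1 := le_sum_div_pow m k
    have h2 : m / 2 ^ (k + 1) = m / 2 ^ k / 2 := by
      rw [pow_succ, Nat.div_div_eq_div_mul]
    rw [Finset.sum_range_succ, h2]
    omega

lemma J_le (m : ℕ) : J m ≤ 2 * m := by
  have := sum_div_pow_le m (m + 1)
  unfold J; omega

lemma le_J (m : ℕ) : 2 * m ≤ J m + (Nat.log 2 m + 1) := by
  set L := Nat.log 2 m with hL
  have h := le_sum_div_pow m (L + 1)
  have h0 : m / 2 ^ (L + 1) = 0 :=
    Nat.div_eq_of_lt (Nat.lt_pow_succ_log_self one_lt_two m)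
  have hsub : (∑ i ∈ Finset.range (L + 1), m / 2 ^ i) ≤ J m := by
    apply Finset.sum_le_sum_of_subset
    apply Finset.range_subset_range.mpr
    have := Nat.log_le_self 2 m
    omega
  omega

lemma exists_decomp (m : ℕ) : ∀ (n d : ℕ), d ≤ n * m →
    ∃ e : Fin n → ℕ, (∀ k, e k ≤ m) ∧ ∑ k, e k = d
  | 0, d, h => by
    refine ⟨fun k => 0, fun k => k.elim0, ?_⟩
    simp at h ⊢
    omega
  | n + 1, d, h => by
    have hm := Nat.succ_mul n m
    obtain ⟨e, he, hs⟩ := exists_decomp m n (d - min d m) (by rw [hm] at h; omega)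
    refine ⟨Fin.cons (min d m) e, ?_, ?_⟩
    · intro k
      refine Fin.cases ?_ ?_ k
      · simpa using min_le_right d m
      · intro i; simpa using he i
    · rw [Fin.sum_cons, hs]; omega

/-! ### Auxiliary linear algebra lemmas -/

noncomputable def Lmap (D : Polynomial ℂ) : Polynomial ℂ →ₗ[ℂ] RatFunc ℂ :=
  (LinearMap.mulRight ℂ ((algebraMap (Polynomial ℂ) (RatFunc ℂ) D)⁻¹)).comp
    (IsScalarTower.toAlgHom ℂ (Polynomial ℂ) (RatFunc ℂ)).toLinearMap

lemma Lmap_apply (D Q : Polynomial ℂ) :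
    Lmap D Q = algebraMap (Polynomial ℂ) (RatFunc ℂ) Q /
      algebraMap (Polynomial ℂ) (RatFunc ℂ) D := by
  simp [Lmap, div_eq_mul_inv]

lemma Lmap_injective {D : Polynomial ℂ} (hD : D ≠ 0) : Function.Injective (Lmap D) := by
  have hD' : algebraMap (Polynomial ℂ) (RatFunc ℂ) D ≠ 0 :=
    (map_ne_zero_iff _ (IsFractionRing.injective (Polynomial ℂ) (RatFunc ℂ))).mpr hD
  intro a b hab
  rw [Lmap_apply, Lmap_apply, div_eq_div_iff hD' hD'] at hab
  exact IsFractionRing.injective (Polynomial ℂ) (RatFunc ℂ) (mul_right_cancel₀ hD' hab)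

lemma finrank_span_eq (D : Polynomial ℂ) (hD : D ≠ 0) (S : Set (RatFunc ℂ)) (N : ℕ)
    (h1 : ∀ f ∈ S, ∃ Q : Polynomial ℂ, Q.natDegree ≤ N ∧ f = Lmap D Q)
    (h2 : ∀ d ≤ N, Lmap D (X ^ d) ∈ S) :
    Module.finrank ℂ (Submodule.span ℂ S) = N + 1 := by
  classical
  have hspan : Submodule.span ℂ S = Submodule.map (Lmap D) (degreeLT ℂ (N + 1)) := by
    apply le_antisymm
    · rw [Submodule.span_le]
      intro f hf
      obtain ⟨Q, hQ, rfl⟩ := h1 f hf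
      refine ⟨Q, ?_, rfl⟩
      rw [SetLike.mem_coe, mem_degreeLT]
      calc Q.degree ≤ (Q.natDegree : WithBot ℕ) := degree_le_natDegree
        _ < ((N + 1 : ℕ) : WithBot ℕ) := by
          exact_mod_cast Nat.lt_succ_of_le hQ
    · rw [degreeLT_eq_span_X_pow, Submodule.map_span, Submodule.span_le]
      rintro f ⟨Q, hQ, rfl⟩
      simp only [Finset.coe_image, Set.mem_image, Finset.mem_coe, Finset.mem_range] at hQ
      obtain ⟨d, hd, rfl⟩ := hQ
      exact Submodule.subset_span (h2 d (Nat.lt_succ_iff.mp hd))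
  rw [hspan]
  rw [LinearEquiv.finrank_eq
    (Submodule.equivMapOfInjective (Lmap D) (Lmap_injective hD) (degreeLT ℂ (N + 1))).symm]
  rw [LinearEquiv.finrank_eq (degreeLTEquiv ℂ (N + 1))]
  exact Module.finrank_fin_fun ℂ

lemma P_ne_zero (z : ℕ → ℂ) (m : ℕ) : P z m ≠ 0 := by
  apply (monic_prod_of_monic _ _ fun i _ => (monic_X_sub_C (z i)).pow _).ne_zero

lemma finrank_span_B (z : ℕ → ℂ) (m : ℕ) :
    Module.finrank ℂ (Submodule.span ℂ (B z m)) = J m + 1 := by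
  apply finrank_span_eq (P z m) (P_ne_zero z m)
  · rintro f ⟨Q, hQ, rfl⟩
    exact ⟨Q, hQ, (Lmap_apply _ _).symm⟩
  · intro d hd
    exact ⟨X ^ d, by simpa [natDegree_X_pow] using hd, Lmap_apply _ _⟩

lemma finrank_span_prodSet (z : ℕ → ℂ) (p n : ℕ) :
    Module.finrank ℂ (Submodule.span ℂ (prodSet z p n)) = n * J p + 1 := by
  classical
  have hPz : algebraMap (Polynomial ℂ) (RatFunc ℂ) ((P z p) ^ n) =
      (algebraMap (Polynomial ℂ) (RatFunc ℂ) (P z p)) ^ n := map_pow _ _ _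
  apply finrank_span_eq ((P z p) ^ n) (pow_ne_zero n (P_ne_zero z p))
  · rintro f ⟨g, hg, rfl⟩
    choose Q hQdeg hQ using hg
    refine ⟨∏ k, Q k, ?_, ?_⟩
    · calc (∏ k, Q k).natDegree ≤ ∑ k, (Q k).natDegree := natDegree_prod_le _ _
        _ ≤ ∑ _k : Fin n, J p := Finset.sum_le_sum fun k _ => hQdeg k
        _ = n * J p := by simp [Finset.sum_const, mul_comm]
    · rw [Lmap_apply]
      calc ∏ k, g k
          = ∏ k : Fin n, (algebraMap (Polynomial ℂ) (RatFunc ℂ) (Q k) /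
              algebraMap (Polynomial ℂ) (RatFunc ℂ) (P z p)) := by
            exact Finset.prod_congr rfl fun k _ => hQ k
        _ = (∏ k : Fin n, algebraMap (Polynomial ℂ) (RatFunc ℂ) (Q k)) /
              (∏ _k : Fin n, algebraMap (Polynomial ℂ) (RatFunc ℂ) (P z p)) := by
            rw [Finset.prod_div_distrib]
        _ = algebraMap (Polynomial ℂ) (RatFunc ℂ) (∏ k, Q k) /
              algebraMap (Polynomial ℂ) (RatFunc ℂ) ((P z p) ^ n) := by
            rw [map_prod, hPz, Finset.prod_const]
            simp
  · intro d hd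
    obtain ⟨e, he, hsum⟩ := exists_decomp (J p) n d hd
    refine ⟨fun k => algebraMap (Polynomial ℂ) (RatFunc ℂ) (X ^ e k) /
        algebraMap (Polynomial ℂ) (RatFunc ℂ) (P z p), fun k =>
      ⟨X ^ e k, by simpa [natDegree_X_pow] using he k, rfl⟩, ?_⟩
    rw [Lmap_apply]
    rw [Finset.prod_div_distrib, ← map_prod, Finset.prod_pow_eq_pow_sum, hsum, hPz,
      Finset.prod_const]
    simp

/-! ### The logarithm bound -/

lemma log_bound {ε : ℝ} (hε : 0 < ε) :
    ∃ p₀ : ℕ, ∀ p : ℕ, p₀ ≤ p → (Nat.log 2 p + 1 : ℝ) ≤ 2 * ε * p := by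
  refine ⟨max 2 ⌈(4 : ℝ) / ε ^ 2⌉₊, fun p hp => ?_⟩
  have hp2 : 2 ≤ p := le_trans (le_max_left _ _) hp
  have hpε : (4 : ℝ) / ε ^ 2 ≤ p := by
    have := le_trans (le_max_right 2 ⌈(4 : ℝ) / ε ^ 2⌉₊) hp
    exact_mod_cast (Nat.ceil_le.mp this)
  have hppos : (0 : ℝ) < p := by positivity
  set s : ℝ := Real.sqrt p with hs
  have hs2 : s ^ 2 = (p : ℝ) := Real.sq_sqrt hppos.le
  have hspos : 0 < s := Real.sqrt_pos.mpr hppos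
  have hεs : 2 ≤ ε * s := by
    have h1 : 2 / ε ≤ s := by
      rw [hs, ← Real.sqrt_sq (by positivity : (0:ℝ) ≤ 2 / ε)]
      apply Real.sqrt_le_sqrt
      rw [div_pow]
      calc (2:ℝ)^2 / ε^2 = 4 / ε^2 := by norm_num
        _ ≤ (p:ℝ) := hpε
    calc (2:ℝ) = ε * (2 / ε) := by field_simp
      _ ≤ ε * s := by nlinarith
  have hlog1 : (Nat.log 2 p : ℝ) * Real.log 2 ≤ Real.log p := by
    rw [← Real.log_pow]
    apply Real.log_le_log (by positivity)
    exact_mod_cast Nat.pow_log_le_self 2 (by omega : p ≠ 0)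
  have hlog2 : Real.log p = 2 * Real.log s := by
    rw [← hs2, Real.log_pow]; push_cast; ring
  have hlog3 : Real.log s ≤ s - 1 := Real.log_le_sub_one_of_pos hspos
  have hl2 : (0.5 : ℝ) ≤ Real.log 2 := by
    have := Real.log_two_gt_d9; linarith
  have hLnn : (0 : ℝ) ≤ (Nat.log 2 p : ℝ) := Nat.cast_nonneg _
  nlinarith [mul_le_mul_of_nonneg_left hl2 hLnn, mul_le_mul_of_nonneg_right hεs hspos.le]

/-- The graded algebra `B = ⊕_n B_n` is approximable: for every real `ε > 0`
there exists `p₀` such that for all `p ≥ p₀` and all `n ≥ 1`, the dimension of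
the `ℂ`-linear span in `ℂ(x)` of all `n`-fold products of elements of `B_p` is
at least `(1 − ε)` times the dimension of `B_{n·p}`. -/
theorem B_approximable (z : ℕ → ℂ) (hz : Function.Injective z)
    (ε : ℝ) (hε : 0 < ε) :
    ∃ p₀ : ℕ, ∀ p ≥ p₀, ∀ n : ℕ, 1 ≤ n →
      (1 - ε) * (Module.finrank ℂ (Submodule.span ℂ (B z (n * p))) : ℝ) ≤
        (Module.finrank ℂ (Submodule.span ℂ (prodSet z p n)) : ℝ) := by
  obtain ⟨p₀, hp₀⟩ := log_bound hε
  refine ⟨p₀, fun p hp n hn => ?_⟩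
  rw [finrank_span_B, finrank_span_prodSet]
  have hJnp : ((J (n * p) : ℝ)) ≤ 2 * (n * p) := by
    exact_mod_cast J_le (n * p)
  have hJp : 2 * (p : ℝ) ≤ (J p : ℝ) + ((Nat.log 2 p : ℝ) + 1) := by
    exact_mod_cast le_J p
  have hlog := hp₀ p hp
  have hn1 : (1 : ℝ) ≤ n := by exact_mod_cast hn
  push_cast
  rcases le_or_gt ε 1 with hε1 | hε1
  · nlinarith [mul_le_mul_of_nonneg_left hJnp (by linarith : (0:ℝ) ≤ 1 - ε),
      mul_le_mul_of_nonneg_left hlog (by linarith : (0:ℝ) ≤ (n:ℝ)),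
      mul_le_mul_of_nonneg_left hJp (by linarith : (0:ℝ) ≤ (n:ℝ))]
  · have hJnn : (0 : ℝ) ≤ (J (n * p) : ℝ) := Nat.cast_nonneg _
    have hJpn : (0 : ℝ) ≤ (n : ℝ) * (J p : ℝ) := by positivity
    nlinarith
end

section
/- The set of complex numbers z such that some nonzero element f of some graded piece B_n has a pole at z (i.e. the multiplicity of z as a root of the denominator of f in lowest terms exceeds its multiplicity as a root of the numerator) is infinite; equivalently, the set of valuations of K^gr(B) = ℂ(x) taking a negative value on some element of B (relative to the degree-1 element b₁ = 1/P₁) is infinite. -/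
open Polynomial

/- Taking `Q = 1` gives `1 / P_n ∈ B_n`, and `P_{2^i}` vanishes at `z_i`, so `z_i` is a pole of
`1 / P_{2^i}`. The `z_i` being pairwise distinct, there are infinitely many poles. -/

theorem RatFunc.rootMultiplicity_num_lt_denom_iff {K : Type*} [Field K] {p q : K[X]}
    (hp : p ≠ 0) (hq : q ≠ 0) (a : K) :
    (algebraMap K[X] (RatFunc K) q / algebraMap K[X] (RatFunc K) p).num.rootMultiplicity a <
        (algebraMap K[X] (RatFunc K) q / algebraMap K[X] (RatFunc K) p).denom.rootMultiplicity a ↔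
      q.rootMultiplicity a < p.rootMultiplicity a := by
  set f := algebraMap K[X] (RatFunc K) q / algebraMap K[X] (RatFunc K) p
  have hf : f ≠ 0 := div_ne_zero (RatFunc.algebraMap_ne_zero hq) (RatFunc.algebraMap_ne_zero hp)
  have cross : f.num * p = q * f.denom := (RatFunc.num_mul_eq_mul_denom_iff hp).mpr rfl
  have hmult := congrArg (rootMultiplicity a) cross
  rw [rootMultiplicity_mul (mul_ne_zero (RatFunc.num_ne_zero hf) hp),
    rootMultiplicity_mul (mul_ne_zero hq f.denom_ne_zero)] at hmult
  omega

theorem P_monic (z : ℕ → ℂ) (n : ℕ) : (P z n).Monic :=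
  monic_prod_of_monic _ _ fun j _ => (monic_X_sub_C (z j)).pow _

theorem P_isRoot {z : ℕ → ℂ} {n i : ℕ} (h : 2 ^ i ≤ n) : (P z n).IsRoot (z i) := by
  rw [P, IsRoot, eval_prod]
  refine Finset.prod_eq_zero (i := i) ?_ ?_
  · exact Finset.mem_range.mpr (Nat.lt_succ_of_lt ((Nat.lt_two_pow_self).trans_le h))
  · rw [eval_pow, eval_sub, eval_X, eval_C, sub_self]
    exact zero_pow (Nat.div_pos h (Nat.two_pow_pos i)).ne'

theorem one_div_P_mem_B (z : ℕ → ℂ) (n : ℕ) :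
    algebraMap ℂ[X] (RatFunc ℂ) 1 / algebraMap ℂ[X] (RatFunc ℂ) (P z n) ∈ B z n :=
  ⟨1, by simp, rfl⟩

/-- The set of complex numbers `w` such that some nonzero element `f` of some
graded piece `B_n` has a pole at `w` (the multiplicity of `w` as a root of the
denominator of `f` in lowest terms exceeds its multiplicity as a root of the
numerator) is infinite; equivalently, the set of valuations of
`K^gr(B) = ℂ(x)` taking a negative value on some element of `B` (relative to
the degree-1 element `b₁ = 1/P₁`) is infinite. -/
theorem poles_infinite (z : ℕ → ℂ) (hz : Function.Injective z) :
    {w : ℂ | ∃ (n : ℕ) (f : RatFunc ℂ), f ∈ B z n ∧ f ≠ 0 ∧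
      f.num.rootMultiplicity w < f.denom.rootMultiplicity w}.Infinite := by
  refine (Set.infinite_range_of_injective hz).mono ?_
  rintro w ⟨i, rfl⟩
  have hP : P z (2 ^ i) ≠ 0 := (P_monic z _).ne_zero
  refine ⟨2 ^ i, _, one_div_P_mem_B z _,
    div_ne_zero (by simp) (RatFunc.algebraMap_ne_zero hP), ?_⟩
  rw [RatFunc.rootMultiplicity_num_lt_denom_iff hP one_ne_zero, ← C_1, rootMultiplicity_C]
  exact (rootMultiplicity_pos hP).mpr (P_isRoot le_rfl)
end
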